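/- arXiv:1310.7533 — 6 statements merged into one kernel-verified Lean document; each statement's English description precedes it below -/
import Mathlib

section
/- Let D be a finite directed graph with m vertices and adjacency matrix M_D. Then the characteristic polynomial P_D(x) of M_D satisfies P_D(x) = x^m + \sum_{\sigma} (-1)^{|\sigma|} x^{m - \ell(\sigma)}, where the sum ranges over all cycles \sigma of D (i.e., collections of pairwise vertex-disjoint simple directed cycles), |\sigma| is the number of simple cycles in \sigma, and \ell(\sigma) is the total number of vertices (equivalently edges) covered by \sigma. -/
/-- A cycle in the digraph with `m` vertices whose adjacency matrix is `M`
(i.e. `M i j` directed edges from vertex `i` to vertex `j`): a nonempty set `S`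
of vertices, a permutation of the vertices fixing everything outside `S`
(its restriction to `S` is a disjoint union of simple directed cycles on the
vertices of `S`), together with a choice, for each `v ∈ S`, of one of the
`M v (perm v)` directed edges from `v` to `perm v`. -/
structure DigraphCycle (m : ℕ) (M : Matrix (Fin m) (Fin m) ℕ) where
  S : Finset (Fin m)
  nonempty : S.Nonempty
  perm : Equiv.Perm (Fin m)
  fixes : ∀ v ∉ S, perm v = v
  edge : ∀ v ∈ S, Fin (M v (perm v))

/-- The number of simple cycles making up the cycle: the nontrivial cycles of the
permutation together with the fixed vertices of `S` (self-loops). -/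
noncomputable def DigraphCycle.size {m : ℕ} {M : Matrix (Fin m) (Fin m) ℕ}
    (σ : DigraphCycle m M) : ℕ :=
  σ.perm.cycleType.card + (σ.S.filter fun v => σ.perm v = v).card

/-- The length of the cycle: the total number of vertices (equivalently edges) covered. -/
def DigraphCycle.length {m : ℕ} {M : Matrix (Fin m) (Fin m) ℕ}
    (σ : DigraphCycle m M) : ℕ :=
  σ.S.card

open Finset Polynomial Matrix Equiv

namespace DigraphCycleAux

variable {m : ℕ} {M : Matrix (Fin m) (Fin m) ℕ}

/-- `DigraphCycle` as a sigma type. -/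
def dcEquiv (m : ℕ) (M : Matrix (Fin m) (Fin m) ℕ) :
    DigraphCycle m M ≃ Σ S : Finset (Fin m), Σ π : Equiv.Perm (Fin m),
      PLift (S.Nonempty ∧ ∀ v ∉ S, π v = v) × (∀ v ∈ S, Fin (M v (π v))) where
  toFun σ := ⟨σ.S, σ.perm, ⟨⟨σ.nonempty, σ.fixes⟩⟩, σ.edge⟩
  invFun x := ⟨x.1, x.2.2.1.down.1, x.2.1, x.2.2.1.down.2, x.2.2.2⟩
  left_inv σ := rfl
  right_inv x := rfl

noncomputable instance : Fintype (DigraphCycle m M) :=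
  Fintype.ofEquiv _ (dcEquiv m M).symm

lemma card_edge (S : Finset (Fin m)) (n : Fin m → ℕ) :
    Fintype.card (∀ v ∈ S, Fin (n v)) = ∏ v ∈ S, n v := by
  rw [Fintype.card_pi]
  have h : ∀ v : Fin m, Fintype.card (v ∈ S → Fin (n v)) = if v ∈ S then n v else 1 := by
    intro v
    by_cases hv : v ∈ S
    · haveI := uniqueProp hv
      rw [if_pos hv, Fintype.card_congr (Equiv.funUnique (v ∈ S) (Fin (n v))),
        Fintype.card_fin]
    · haveI : IsEmpty (v ∈ S) := ⟨hv⟩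
      rw [if_neg hv, Fintype.card_unique]
  simp_rw [h]
  rw [Finset.prod_ite_mem, Finset.univ_inter]

lemma sign_aux (π : Equiv.Perm (Fin m)) (S : Finset (Fin m)) (h : ∀ v ∉ S, π v = v) :
    ((Equiv.Perm.sign π : ℤ)) * (-1) ^ S.card =
      (-1) ^ (π.cycleType.card + (S.filter fun v => π v = v).card) := by
  have hfilter : S.filter (fun v => ¬ π v = v) = π.support := by
    ext v
    simp only [Finset.mem_filter, Equiv.Perm.mem_support]
    exact ⟨fun hv => hv.2, fun hv => ⟨by by_contra hvS; exact hv (h v hvS), hv⟩⟩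
  have hcard : (S.filter fun v => π v = v).card + π.support.card = S.card := by
    rw [← hfilter]
    exact Finset.card_filter_add_card_filter_not _
  have hsign : (Equiv.Perm.sign π : ℤ) = (-1) ^ (π.support.card + π.cycleType.card) := by
    rw [Equiv.Perm.sign_of_cycleType, Equiv.Perm.sum_cycleType]
    push_cast
    rfl
  rw [hsign, ← pow_add]
  have : π.support.card + π.cycleType.card + S.card =
      2 * π.support.card + (π.cycleType.card + (S.filter fun v => π v = v).card) := by omega
  rw [this, pow_add, pow_mul, neg_one_sq, one_pow, one_mul]

end DigraphCycleAux

open DigraphCycleAux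

/-- Coefficient theorem for digraphs: the characteristic polynomial of the adjacency
matrix of a digraph `D` with `m` vertices equals
`x^m + ∑_σ (-1)^{|σ|} x^{m - ℓ(σ)}`, the sum ranging over all cycles `σ` of `D`. -/
theorem digraph_coefficient_theorem (m : ℕ) (M : Matrix (Fin m) (Fin m) ℕ) :
    (M.map (Nat.cast : ℕ → ℤ)).charpoly =
      Polynomial.X ^ m +
        ∑ᶠ σ : DigraphCycle m M,
          (-1 : Polynomial ℤ) ^ σ.size * Polynomial.X ^ (m - σ.length) := by
  classical
  set A : Matrix (Fin m) (Fin m) ℤ := M.map (Nat.cast : ℕ → ℤ) with hA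
  -- the common "term" indexed by a pair (S, π)
  set G : Finset (Fin m) → Equiv.Perm (Fin m) → Polynomial ℤ := fun S π =>
    if ∀ v ∉ S, π v = v then
      (∏ v ∈ S, M v (π v)) •
        ((-1 : Polynomial ℤ) ^ (π.cycleType.card + (S.filter fun v => π v = v).card) *
          Polynomial.X ^ (m - S.card))
    else 0 with hG
  -- Step 1: the characteristic polynomial equals the full double sum
  have step1 : A.charpoly = ∑ S : Finset (Fin m), ∑ π : Equiv.Perm (Fin m), G S π := by
    rw [show A.charpoly = (charmatrix A).det from rfl, ← Matrix.det_transpose,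
      Matrix.det_apply']
    have entry : ∀ (π : Equiv.Perm (Fin m)) (i : Fin m),
        (charmatrix A)ᵀ (π i) i = (-C (A i (π i))) + (if π i = i then (X : ℤ[X]) else 0) := by
      intro π i
      rw [Matrix.transpose_apply]
      by_cases h : π i = i
      · rw [h, charmatrix_apply_eq, if_pos rfl]
        ring
      · rw [charmatrix_apply_ne _ _ _ (fun he => h he.symm), if_neg h, add_zero]
    simp_rw [entry, Finset.prod_add, Finset.powerset_univ, Finset.mul_sum]
    rw [Finset.sum_comm]
    refine Finset.sum_congr rfl fun T _ => Finset.sum_congr rfl fun π _ => ?_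
    have hprodite : (∏ i ∈ Finset.univ \ T, if π i = i then (X : ℤ[X]) else 0) =
        if ∀ i ∉ T, π i = i then (X : ℤ[X]) ^ (m - T.card) else 0 := by
      have hcard : (Finset.univ \ T).card = m - T.card := by
        rw [Finset.card_sdiff_of_subset (Finset.subset_univ T), Finset.card_univ, Fintype.card_fin]
      by_cases h : ∀ i ∉ T, π i = i
      · rw [if_pos h, ← hcard, ← Finset.prod_const]
        exact Finset.prod_congr rfl fun i hi => if_pos (h i (Finset.mem_sdiff.mp hi).2)
      · rw [if_neg h]
        push_neg at h
        obtain ⟨i, hiT, hne⟩ := h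
        exact Finset.prod_eq_zero (Finset.mem_sdiff.mpr ⟨Finset.mem_univ i, hiT⟩) (if_neg hne)
    rw [hprodite]
    simp only [hG]
    by_cases h : ∀ i ∉ T, π i = i
    · rw [if_pos h, if_pos h]
      have hneg : (∏ i ∈ T, -C (A i (π i))) =
          (-1 : ℤ[X]) ^ T.card * C (∏ i ∈ T, A i (π i)) := by
        have hn : ∀ i ∈ T, -C (A i (π i)) = (-1 : ℤ[X]) * C (A i (π i)) :=
          fun i _ => (neg_one_mul _).symm
        rw [Finset.prod_congr rfl hn, Finset.prod_mul_distrib, Finset.prod_const, map_prod]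
      have hAM : (∏ i ∈ T, A i (π i)) = ((∏ i ∈ T, M i (π i) : ℕ) : ℤ) := by
        rw [Nat.cast_prod]
        exact Finset.prod_congr rfl fun i _ => rfl
      rw [hneg, hAM, nsmul_eq_mul, Polynomial.C_eq_natCast]
      have hsgn : ((Equiv.Perm.sign π : ℤ) : ℤ[X]) * (-1) ^ T.card =
          (-1 : ℤ[X]) ^ (π.cycleType.card + (T.filter fun v => π v = v).card) := by
        have h2 := congrArg (fun z : ℤ => (z : ℤ[X])) (sign_aux π T h)
        push_cast at h2
        exact h2
      linear_combination (((∏ i ∈ T, M i (π i) : ℕ) : ℤ[X]) * X ^ (m - T.card)) * hsgn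
    · rw [if_neg h, if_neg h, mul_zero, mul_zero]
  -- Step 2: the finsum equals the double sum restricted to nonempty S
  have step2 : (∑ᶠ σ : DigraphCycle m M,
      (-1 : Polynomial ℤ) ^ σ.size * Polynomial.X ^ (m - σ.length)) =
      ∑ S : Finset (Fin m), ∑ π : Equiv.Perm (Fin m),
        if S.Nonempty then G S π else 0 := by
    rw [finsum_eq_sum_of_fintype]
    rw [← Equiv.sum_comp (dcEquiv m M).symm
      (fun σ : DigraphCycle m M => (-1 : Polynomial ℤ) ^ σ.size * Polynomial.X ^ (m - σ.length))]
    rw [← Finset.univ_sigma_univ, Finset.sum_sigma]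
    refine Finset.sum_congr rfl fun S _ => ?_
    rw [← Finset.univ_sigma_univ, Finset.sum_sigma]
    refine Finset.sum_congr rfl fun π _ => ?_
    have hval : ∀ x : PLift (S.Nonempty ∧ ∀ v ∉ S, π v = v) × (∀ v ∈ S, Fin (M v (π v))),
        (fun σ : DigraphCycle m M =>
            (-1 : Polynomial ℤ) ^ σ.size * Polynomial.X ^ (m - σ.length))
          ((dcEquiv m M).symm ⟨S, π, x⟩) =
        (-1 : Polynomial ℤ) ^ (π.cycleType.card + (S.filter fun v => π v = v).card) *
          Polynomial.X ^ (m - S.card) := fun x => rfl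
    simp_rw [hval]
    rw [Finset.sum_const, Finset.card_univ, Fintype.card_prod]
    by_cases hP : S.Nonempty ∧ ∀ v ∉ S, π v = v
    · haveI : Unique (PLift (S.Nonempty ∧ ∀ v ∉ S, π v = v)) :=
        { default := ⟨hP⟩, uniq := fun _ => rfl }
      rw [Fintype.card_unique, one_mul, card_edge S (fun v => M v (π v))]
      simp only [hG]
      rw [if_pos hP.1, if_pos hP.2]
    · haveI : IsEmpty (PLift (S.Nonempty ∧ ∀ v ∉ S, π v = v)) := ⟨fun x => hP x.down⟩
      rw [Fintype.card_eq_zero, zero_mul, zero_smul]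
      simp only [hG]
      by_cases hne : S.Nonempty
      · rw [if_pos hne, if_neg (fun hfix => hP ⟨hne, hfix⟩)]
      · rw [if_neg hne]
  -- Step 3: combine
  rw [step1, step2]
  have key : ∀ S : Finset (Fin m),
      (∑ π : Equiv.Perm (Fin m), G S π) -
        (∑ π : Equiv.Perm (Fin m), if S.Nonempty then G S π else 0) =
      if S = ∅ then Polynomial.X ^ m else 0 := by
    intro S
    by_cases hS : S = ∅
    · subst hS
      rw [if_pos rfl]
      simp only [Finset.not_nonempty_empty, if_neg, if_false]
      rw [Finset.sum_const, smul_zero, sub_zero]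
      rw [Finset.sum_eq_single (1 : Equiv.Perm (Fin m))]
      · simp [hG]
      · intro π _ hπ
        rw [hG]
        simp only
        rw [if_neg]
        intro hfix
        exact hπ (Equiv.ext fun v => hfix v (Finset.notMem_empty v))
      · intro h; exact absurd (Finset.mem_univ _) h
    · rw [if_neg hS]
      have : ∀ π : Equiv.Perm (Fin m), (if S.Nonempty then G S π else 0) = G S π := by
        intro π
        rw [if_pos (Finset.nonempty_iff_ne_empty.mpr hS)]
      simp_rw [this, sub_self]
  have : (∑ S : Finset (Fin m), ∑ π : Equiv.Perm (Fin m), G S π) =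
      Polynomial.X ^ m + ∑ S : Finset (Fin m), ∑ π : Equiv.Perm (Fin m),
        if S.Nonempty then G S π else 0 := by
    have h2 : ∑ S : Finset (Fin m),
        ((∑ π : Equiv.Perm (Fin m), G S π) -
          (∑ π : Equiv.Perm (Fin m), if S.Nonempty then G S π else 0)) =
        Polynomial.X ^ m := by
      simp_rw [key]
      rw [Finset.sum_ite_eq' Finset.univ (∅ : Finset (Fin m)) fun _ => Polynomial.X ^ m,
        if_pos (Finset.mem_univ _)]
    rw [Finset.sum_sub_distrib] at h2
    linear_combination h2
  rw [this]
end

section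
/- Let M be a nonnegative real square matrix that is expanding, meaning that for all indices i,j the (i,j) entry of M^m tends to infinity in limsup as m → ∞. Then M has a simple eigenvalue equal to its spectral radius λ(M), and there is a strictly positive eigenvector associated to this eigenvalue. -/
/-- A nonnegative real square matrix is *expanding* if every entry of `M^m` has
`limsup` equal to `∞` as `m → ∞`. -/
def Matrix.IsExpanding {n : ℕ} (M : Matrix (Fin n) (Fin n) ℝ) : Prop :=
  ∀ i j, Filter.limsup (fun m : ℕ => (((M ^ m) i j : ℝ) : EReal)) Filter.atTop = ⊤

/-- The spectral radius of a real square matrix: the maximum of the absolute values of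
its complex eigenvalues (roots of the characteristic polynomial over `ℂ`). -/
noncomputable def Matrix.spectralRadius {n : ℕ} (M : Matrix (Fin n) (Fin n) ℝ) : ℝ :=
  sSup {r : ℝ | ∃ μ : ℂ, ((M.map (Complex.ofReal)).charpoly).IsRoot μ ∧ r = ‖μ‖}

/-!
An expanding nonnegative matrix `M` is irreducible, so some sum of its powers is a strictly
positive matrix `B` commuting with `M`. The Collatz–Wielandt quotient `min_i (M B x)_i / (B x)_i`
is continuous on the standard simplex, hence attains a maximum `r`, and `r` is the largest `t`
with `t • x ≤ M x` for some nonzero `x ≥ 0`. If such an `x` had `M x ≠ r • x`, applying `B` would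
make every inequality strict and allow a larger `t`; so `x` is an eigenvector, and irreducibility
makes it strictly positive. The absolute values of a complex eigenvector of eigenvalue `μ` satisfy
`‖μ‖ • |v| ≤ M |v|`, so `‖μ‖ ≤ r` and `r` is the spectral radius. For a principal submatrix the
same vector, extended by a zero, gives `‖μ‖ < r`, so every principal minor of `r - M` is positive.
As the derivative of the characteristic polynomial is the sum of these minors, `r` is a simple root.
-/

open Polynomial Finset Filter Topology

theorem exists_apply_pos_of_nonneg_of_ne_zero {ι α : Type*} [PartialOrder α] [Zero α]
    {x : ι → α} (hx : 0 ≤ x) (hx0 : x ≠ 0) : ∃ i, 0 < x i :=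
  (Pi.lt_def.mp (hx.lt_of_ne' hx0)).2

theorem le_inf'_div_iff_smul_le {ι : Type*} [Fintype ι] [Nonempty ι] {v w : ι → ℝ}
    (hw : ∀ i, 0 < w i) {t : ℝ} :
    t ≤ univ.inf' univ_nonempty (fun i => v i / w i) ↔ t • w ≤ v := by
  simp only [le_inf'_iff, mem_univ, forall_const, le_div_iff₀ (hw _), Pi.le_def, Pi.smul_apply,
    smul_eq_mul]

namespace Polynomial

theorem rootMultiplicity_eq_one_of_not_isRoot_derivative {R : Type*} [CommRing R] {p : R[X]}
    {a : R} (hp : p ≠ 0) (hroot : p.IsRoot a) (hderiv : ¬(derivative p).IsRoot a) :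
    p.rootMultiplicity a = 1 := by
  have hpos := (rootMultiplicity_pos hp).mpr hroot
  have := mt (one_lt_rootMultiplicity_iff_isRoot hp).mp fun h => hderiv h.2
  omega

theorem Monic.eval_pos_of_forall_not_isRoot {p : ℝ[X]} (hp : p.Monic) {a : ℝ}
    (h : ∀ x, a ≤ x → ¬p.IsRoot x) : 0 < p.eval a := by
  rcases Nat.eq_zero_or_pos p.natDegree with hdeg | hdeg
  · simp [hp.natDegree_eq_zero.mp hdeg]
  have htend : Tendsto (fun x => p.eval x) atTop atTop :=
    p.tendsto_atTop_of_leadingCoeff_nonneg (natDegree_pos_iff_degree_pos.mp hdeg)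
      (by simp [hp.leadingCoeff])
  obtain ⟨b, hb, hab⟩ := ((htend.eventually_gt_atTop 0).and (eventually_ge_atTop a)).exists
  by_contra! ha
  obtain ⟨c, hc, hc0⟩ := intermediate_value_Icc hab p.continuous.continuousOn ⟨ha, hb.le⟩
  exact h c hc.1 hc0

end Polynomial

namespace Matrix

section Charpoly

variable {R : Type*} [CommRing R] {ι : Type*} [Fintype ι] [DecidableEq ι]

theorem derivative_det (A : Matrix ι ι R[X]) :
    derivative A.det = ∑ i, (A.updateRow i fun j => derivative (A i j)).det := by
  have hprod : ∀ (σ : Equiv.Perm ι) i,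
      ∏ k, (A.updateRow i fun j => derivative (A i j)) k (σ k) =
        (∏ k ∈ univ.erase i, A k (σ k)) * derivative (A i (σ i)) := by
    intro σ i
    rw [← mul_prod_erase univ _ (mem_univ i), mul_comm, updateRow_self]
    congr 1
    exact prod_congr rfl fun k hk => by rw [updateRow_ne (ne_of_mem_erase hk)]
  simp_rw [← det_transpose A, ← det_transpose (updateRow _ _ _), det_apply', transpose_apply,
    hprod, derivative_sum, derivative_intCast_mul, derivative_prod_finset, mul_sum]
  exact sum_comm

theorem charmatrix_submatrix {κ : Type*} [Fintype κ] [DecidableEq κ] (M : Matrix ι ι R)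
    {e : κ → ι} (he : Function.Injective e) :
    (charmatrix M).submatrix e e = charmatrix (M.submatrix e e) := by
  ext i j
  by_cases h : i = j
  · subst h
    simp [charmatrix_apply_eq]
  · simp [charmatrix_apply_ne _ _ _ h, charmatrix_apply_ne _ _ _ (he.ne h)]

theorem derivative_charpoly {k : ℕ} (M : Matrix (Fin (k + 1)) (Fin (k + 1)) R) :
    derivative M.charpoly = ∑ i : Fin (k + 1), (M.submatrix i.succAbove i.succAbove).charpoly := by
  have hrow (i : Fin (k + 1)) : (fun j => derivative (charmatrix M i j)) = Pi.single i 1 := by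
    ext j
    by_cases h : i = j
    · subst h
      simp [charmatrix_apply_eq]
    · simp [charmatrix_apply_ne _ _ _ h, Pi.single_eq_of_ne' h]
  simp_rw [charpoly, derivative_det, hrow, ← adjugate_apply, adjugate_fin_succ_eq_det_submatrix,
    charmatrix_submatrix M Fin.succAbove_right_injective, Even.neg_one_pow ⟨_, rfl⟩, one_mul]

theorem isRoot_charpoly_iff_exists_mulVec_eq_smul {K : Type*} [Field K] (A : Matrix ι ι K)
    (μ : K) : A.charpoly.IsRoot μ ↔ ∃ v ≠ 0, A *ᵥ v = μ • v := by
  rw [IsRoot.def, eval_charpoly, ← exists_mulVec_eq_zero_iff]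
  simp [sub_mulVec, sub_eq_zero, eq_comm]

theorem isRoot_charpoly_map_ofReal {A : Matrix ι ι ℝ} {t : ℝ} (h : A.charpoly.IsRoot t) :
    (A.map (↑)).charpoly.IsRoot (t : ℂ) := by
  rw [show A.map Complex.ofReal = A.map Complex.ofRealHom from rfl, charpoly_map]
  exact h.map

end Charpoly

section Nonneg

variable {ι : Type*} [Fintype ι] {M : Matrix ι ι ℝ} {x : ι → ℝ}

theorem mulVec_nonneg (hM : ∀ i j, 0 ≤ M i j) (hx : 0 ≤ x) : 0 ≤ M *ᵥ x :=
  fun i => sum_nonneg fun j _ => mul_nonneg (hM i j) (hx j)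

theorem mulVec_apply_pos (hM : ∀ i j, 0 < M i j) (hx : 0 ≤ x) (hx0 : x ≠ 0) (i : ι) :
    0 < (M *ᵥ x) i := by
  obtain ⟨j, hj⟩ := exists_apply_pos_of_nonneg_of_ne_zero hx hx0
  exact sum_pos' (fun k _ => mul_nonneg (hM i k).le (hx k)) ⟨j, mem_univ j, mul_pos (hM i j) hj⟩

theorem apply_mul_le_mulVec_apply (hM : ∀ i j, 0 ≤ M i j) (hx : 0 ≤ x) (i j : ι) :
    M i j * x j ≤ (M *ᵥ x) i :=
  single_le_sum (f := fun k => M i k * x k) (fun k _ => mul_nonneg (hM i k) (hx k)) (mem_univ j)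

theorem mulVec_sub_smul_of_commute {B : Matrix ι ι ℝ} (hMB : Commute M B) (t : ℝ) :
    B *ᵥ (M *ᵥ x - t • x) = M *ᵥ (B *ᵥ x) - t • (B *ᵥ x) := by
  rw [mulVec_sub, mulVec_smul, mulVec_mulVec, ← hMB.eq, ← mulVec_mulVec]

theorem smul_mulVec_le_of_commute {B : Matrix ι ι ℝ} (hB : ∀ i j, 0 ≤ B i j) (hMB : Commute M B)
    {t : ℝ} (h : t • x ≤ M *ᵥ x) : t • (B *ᵥ x) ≤ M *ᵥ (B *ᵥ x) := by
  have := mulVec_nonneg hB (sub_nonneg.mpr h)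
  rwa [mulVec_sub_smul_of_commute hMB, sub_nonneg] at this

theorem norm_smul_le_mulVec_norm (hM : ∀ i j, 0 ≤ M i j) {μ : ℂ} {v : ι → ℂ}
    (hv : M.map (↑) *ᵥ v = μ • v) : ‖μ‖ • (fun i => ‖v i‖) ≤ M *ᵥ fun i => ‖v i‖ := by
  intro i
  calc ‖μ‖ * ‖v i‖ = ‖∑ j, (M i j : ℂ) * v j‖ := by
        rw [← norm_mul, ← smul_eq_mul, ← Pi.smul_apply, ← hv]
        rfl
    _ ≤ ∑ j, ‖(M i j : ℂ) * v j‖ := norm_sum_le _ _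
    _ = (M *ᵥ fun i => ‖v i‖) i := by
        simp [mulVec, dotProduct, Complex.norm_real, abs_of_nonneg (hM i _)]

def collatzWielandtSet (M : Matrix ι ι ℝ) : Set ℝ :=
  {t | ∃ x, 0 ≤ x ∧ x ≠ 0 ∧ t • x ≤ M *ᵥ x}

theorem norm_mem_collatzWielandtSet [DecidableEq ι] (hM : ∀ i j, 0 ≤ M i j) {μ : ℂ}
    (hμ : (M.map (↑)).charpoly.IsRoot μ) : ‖μ‖ ∈ M.collatzWielandtSet := by
  obtain ⟨v, hv0, hv⟩ := (isRoot_charpoly_iff_exists_mulVec_eq_smul _ μ).mp hμ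
  obtain ⟨j, hj⟩ := Function.ne_iff.mp hv0
  exact ⟨fun i => ‖v i‖, fun i => norm_nonneg _, fun h => hj (norm_eq_zero.mp (congrFun h j)),
    norm_smul_le_mulVec_norm hM hv⟩

theorem nonneg_of_isGreatest_collatzWielandtSet (hM : ∀ i j, 0 ≤ M i j) {r : ℝ}
    (hr : IsGreatest M.collatzWielandtSet r) : 0 ≤ r := by
  obtain ⟨x, hx, hx0, -⟩ := hr.1
  exact hr.2 ⟨x, hx, hx0, by simpa using mulVec_nonneg hM hx⟩

end Nonneg

section Irreducible

variable {ι : Type*} [Fintype ι] [DecidableEq ι] {M : Matrix ι ι ℝ} {x : ι → ℝ}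

theorem pow_mulVec_eq_smul {r : ℝ} (h : M *ᵥ x = r • x) (m : ℕ) : M ^ m *ᵥ x = r ^ m • x := by
  induction m with
  | zero => simp
  | succ m ih => rw [pow_succ', ← mulVec_mulVec, ih, mulVec_smul, h, smul_smul, pow_succ]

theorem IsIrreducible.exists_commute_pos (hM : M.IsIrreducible) :
    ∃ B : Matrix ι ι ℝ, Commute M B ∧ ∀ i j, 0 < B i j := by
  choose m _ hm using (isIrreducible_iff_exists_pow_pos hM.nonneg).mp hM
  set N := univ.sup (fun p : ι × ι => m p.1 p.2) + 1
  refine ⟨∑ k ∈ range N, M ^ k, Commute.sum_right _ _ _ fun k _ => Commute.self_pow M k,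
    fun i j => ?_⟩
  have hmem : m i j ∈ range N :=
    mem_range_succ_iff.mpr (le_sup (f := fun p : ι × ι => m p.1 p.2) (mem_univ (i, j)))
  rw [sum_apply]
  exact sum_pos' (fun k _ => pow_apply_nonneg hM.nonneg k i j) ⟨m i j, hmem, hm i j⟩

theorem IsIrreducible.pos_of_mulVec_eq_smul (hM : M.IsIrreducible) {r : ℝ} (hx : 0 ≤ x)
    (hx0 : x ≠ 0) (h : M *ᵥ x = r • x) (i : ι) : 0 < x i := by
  obtain ⟨j, hj⟩ := exists_apply_pos_of_nonneg_of_ne_zero hx hx0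
  obtain ⟨m, -, hm⟩ := (isIrreducible_iff_exists_pow_pos hM.nonneg).mp hM i j
  have : 0 < r ^ m * x i :=
    calc 0 < (M ^ m) i j * x j := mul_pos hm hj
      _ ≤ (M ^ m *ᵥ x) i := apply_mul_le_mulVec_apply (pow_apply_nonneg hM.nonneg m) hx i j
      _ = r ^ m * x i := by rw [pow_mulVec_eq_smul h]; rfl
  exact (hx i).lt_of_ne fun h0 => by simp [← h0] at this

theorem IsIrreducible.exists_isGreatest_collatzWielandtSet [Nonempty ι] (hM : M.IsIrreducible) :
    ∃ r, IsGreatest M.collatzWielandtSet r := by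
  obtain ⟨B, hMB, hB⟩ := hM.exists_commute_pos
  have hBx : ∀ x ∈ stdSimplex ℝ ι, ∀ i, 0 < (B *ᵥ x) i := fun x hx =>
    mulVec_apply_pos hB hx.1 fun h => by simpa [h] using hx.2
  set f : (ι → ℝ) → ℝ := fun x =>
    univ.inf' univ_nonempty fun i => (M *ᵥ (B *ᵥ x)) i / (B *ᵥ x) i
  have hf : ContinuousOn f (stdSimplex ℝ ι) := fun x hx =>
    ContinuousWithinAt.finset_inf'_apply _ fun i _ =>
      ContinuousWithinAt.div (by fun_prop) (by fun_prop) (hBx x hx i).ne'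
  obtain ⟨z, hz, hmax⟩ := (isCompact_stdSimplex ℝ ι).exists_isMaxOn
    ⟨_, single_mem_stdSimplex ℝ (Classical.arbitrary ι)⟩ hf
  refine ⟨f z, ⟨B *ᵥ z, fun i => (hBx z hz i).le, fun h => by simpa [h] using hBx z hz,
    (le_inf'_div_iff_smul_le (hBx z hz)).mp le_rfl⟩, ?_⟩
  rintro t ⟨x, hx, hx0, ht⟩
  obtain ⟨j, hj⟩ := exists_apply_pos_of_nonneg_of_ne_zero hx hx0
  have hsum : 0 < ∑ i, x i := sum_pos' (fun i _ => hx i) ⟨j, mem_univ j, hj⟩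
  set c := (∑ i, x i)⁻¹
  have hc : 0 < c := inv_pos.mpr hsum
  have hcx : c • x ∈ stdSimplex ℝ ι :=
    ⟨fun i => mul_nonneg hc.le (hx i), by simp [c, ← mul_sum, inv_mul_cancel₀ hsum.ne']⟩
  calc t ≤ f (c • x) := by
        refine (le_inf'_div_iff_smul_le (hBx _ hcx)).mpr
          (smul_mulVec_le_of_commute (fun i j => (hB i j).le) hMB ?_)
        rw [mulVec_smul, smul_comm]
        exact smul_le_smul_of_nonneg_left ht hc.le
    _ ≤ f z := hmax hcx

theorem IsIrreducible.mulVec_eq_smul_of_isGreatest (hM : M.IsIrreducible) {r : ℝ}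
    (hr : IsGreatest M.collatzWielandtSet r) (hx : 0 ≤ x) (hx0 : x ≠ 0) (h : r • x ≤ M *ᵥ x) :
    M *ᵥ x = r • x := by
  by_contra hne
  obtain ⟨B, hMB, hB⟩ := hM.exists_commute_pos
  set w := B *ᵥ x
  have hw : ∀ i, 0 < w i := mulVec_apply_pos hB hx hx0
  have hgap (i : ι) : r * w i < (M *ᵥ w) i := by
    have := mulVec_apply_pos hB (sub_nonneg.mpr h) (sub_ne_zero.mpr hne) i
    rwa [mulVec_sub_smul_of_commute hMB, Pi.sub_apply, sub_pos] at this
  have hnear : ∀ᶠ t in 𝓝[>] r, ∀ i, t * w i < (M *ᵥ w) i :=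
    nhdsWithin_le_nhds <| eventually_all.mpr fun i =>
      (continuous_id.mul continuous_const).continuousAt.eventually (gt_mem_nhds (hgap i))
  obtain ⟨t, hwt, hrt⟩ := (hnear.and self_mem_nhdsWithin).exists
  obtain ⟨j, -⟩ := exists_apply_pos_of_nonneg_of_ne_zero hx hx0
  exact (hr.2 ⟨w, fun i => (hw i).le, fun h0 => (hw j).ne' (congrFun h0 j),
    fun i => (hwt i).le⟩).not_gt hrt

end Irreducible

theorem spectralRadius_eq_of_isGreatest {n : ℕ} {M : Matrix (Fin n) (Fin n) ℝ}
    (hM : ∀ i j, 0 ≤ M i j) {r : ℝ} (hr : IsGreatest M.collatzWielandtSet r)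
    (hroot : M.charpoly.IsRoot r) : M.spectralRadius = r :=
  IsGreatest.csSup_eq ⟨⟨r, isRoot_charpoly_map_ofReal hroot,
      by simp [abs_of_nonneg (nonneg_of_isGreatest_collatzWielandtSet hM hr)]⟩,
    by rintro _ ⟨μ, hμ, rfl⟩; exact hr.2 (norm_mem_collatzWielandtSet hM hμ)⟩

theorem mulVec_insertNth_zero_succAbove {R : Type*} [NonUnitalNonAssocSemiring R] {k : ℕ}
    (M : Matrix (Fin (k + 1)) (Fin (k + 1)) R) (i : Fin (k + 1)) (x : Fin k → R) (j : Fin k) :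
    (M *ᵥ i.insertNth 0 x) (i.succAbove j) = (M.submatrix i.succAbove i.succAbove *ᵥ x) j := by
  simp [mulVec, dotProduct, Fin.sum_univ_succAbove _ i]

theorem IsIrreducible.lt_of_mem_collatzWielandtSet_submatrix {k : ℕ}
    {M : Matrix (Fin (k + 1)) (Fin (k + 1)) ℝ} (hM : M.IsIrreducible) {r : ℝ}
    (hr : IsGreatest M.collatzWielandtSet r) (i : Fin (k + 1)) {t : ℝ}
    (ht : t ∈ (M.submatrix i.succAbove i.succAbove).collatzWielandtSet) : t < r := by
  obtain ⟨x, hx, hx0, htx⟩ := ht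
  set y : Fin (k + 1) → ℝ := i.insertNth 0 x
  have hy : 0 ≤ y := fun l => by
    induction l using Fin.succAboveCases i with
    | x => simp [y]
    | p j => simpa [y] using hx j
  have hy0 : y ≠ 0 := by
    obtain ⟨j, hj⟩ := Function.ne_iff.mp hx0
    exact fun h => hj (by simpa [y] using congrFun h (i.succAbove j))
  have hty : t • y ≤ M *ᵥ y := fun l => by
    induction l using Fin.succAboveCases i with
    | x => simpa [y] using mulVec_nonneg hM.nonneg hy i
    | p j => simpa [y, mulVec_insertNth_zero_succAbove] using htx j
  refine (hr.2 ⟨y, hy, hy0, hty⟩).lt_of_ne fun htr => ?_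
  subst htr
  have := hM.pos_of_mulVec_eq_smul hy hy0 (hM.mulVec_eq_smul_of_isGreatest hr hy hy0 hty) i
  simp [y] at this

theorem IsExpanding.isIrreducible {n : ℕ} {M : Matrix (Fin n) (Fin n) ℝ}
    (hM : ∀ i j, 0 ≤ M i j) (hexp : M.IsExpanding) : M.IsIrreducible := by
  refine (isIrreducible_iff_exists_pow_pos hM).mpr fun i j => ?_
  have hfreq : ∃ᶠ m in atTop, 0 < (M ^ m) i j := by
    by_contra! h
    have : limsup (fun m : ℕ => (((M ^ m) i j : ℝ) : EReal)) atTop ≤ 0 :=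
      limsup_le_of_le (h := h.mono fun m hm => EReal.coe_nonpos.mpr hm)
    simp [hexp i j] at this
  obtain ⟨m, hm, hm0⟩ := (hfreq.and_eventually (eventually_gt_atTop 0)).exists
  exact ⟨m, hm0, hm⟩

end Matrix

open Matrix in
/-- If `M` is a nonnegative expanding real matrix, then its spectral radius `λ(M)` is a
simple eigenvalue of `M` (algebraic multiplicity one) with a strictly positive
associated eigenvector. -/
theorem expanding_matrix_perron_frobenius (n : ℕ) (hn : 0 < n)
    (M : Matrix (Fin n) (Fin n) ℝ) (hpos : ∀ i j, 0 ≤ M i j)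
    (hexp : M.IsExpanding) :
    M.charpoly.IsRoot M.spectralRadius ∧
    M.charpoly.rootMultiplicity M.spectralRadius = 1 ∧
    ∃ v : Fin n → ℝ, (∀ i, 0 < v i) ∧ M.mulVec v = M.spectralRadius • v := by
  obtain ⟨k, rfl⟩ : ∃ k, n = k + 1 := Nat.exists_eq_add_one.mpr hn
  have hM := hexp.isIrreducible hpos
  obtain ⟨r, hr⟩ := hM.exists_isGreatest_collatzWielandtSet
  obtain ⟨y, hy, hy0, hry⟩ := hr.1
  have hyr : M *ᵥ y = r • y := hM.mulVec_eq_smul_of_isGreatest hr hy hy0 hry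
  have hroot : M.charpoly.IsRoot r :=
    (isRoot_charpoly_iff_exists_mulVec_eq_smul M r).mpr ⟨y, hy0, hyr⟩
  have hr0 : 0 ≤ r := nonneg_of_isGreatest_collatzWielandtSet hpos hr
  have hminor (i : Fin (k + 1)) : 0 < (M.submatrix i.succAbove i.succAbove).charpoly.eval r :=
    (charpoly_monic _).eval_pos_of_forall_not_isRoot fun t hrt ht =>
      (hM.lt_of_mem_collatzWielandtSet_submatrix hr i
        (norm_mem_collatzWielandtSet (fun _ _ => hpos _ _) (isRoot_charpoly_map_ofReal ht))).not_ge
        (by simpa [abs_of_nonneg (hr0.trans hrt)] using hrt)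
  have hderiv : ¬(derivative M.charpoly).IsRoot r := by
    rw [derivative_charpoly, IsRoot.def, eval_finsetSum]
    exact (sum_pos (fun i _ => hminor i) univ_nonempty).ne'
  rw [spectralRadius_eq_of_isGreatest hpos hr hroot]
  exact ⟨hroot, rootMultiplicity_eq_one_of_not_isRoot_derivative (charpoly_monic M).ne_zero hroot
    hderiv, y, hM.pos_of_mulVec_eq_smul hy hy0 hyr, hyr⟩
end

section
/- Let M be an expanding nonnegative real square matrix with spectral radius λ(M). Then for every pair of indices i,j, limsup_{m→∞} (a_{ij}^m)^{1/m} = λ(M), where a_{ij}^m is the (i,j) entry of M^m. -/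
/-!
Gelfand's formula for the complexified matrix, with the `ℓ∞` operator norm, gives
`‖M ^ m‖ ^ (1 / m) → λ(M)`. Every entry of `M ^ m` is at most `‖M ^ m‖`, which bounds the
`limsup` from above. Conversely `λ(M) ^ m ≤ ‖M ^ m‖ ≤ n * (M ^ m) k l` for some entry `(k, l)`.
Since `M` is expanding there are exponents `p k` and `q l`, bounded independently of `m`, with
`1 ≤ (M ^ p k) i k` and `1 ≤ (M ^ q l) l j`, so `(M ^ m) k l ≤ (M ^ (p k + m + q l)) i j`. Hence
`λ(M) ^ m' ≤ n * λ(M) ^ C * (M ^ m') i j` for infinitely many `m'`, and taking `m'`-th roots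
bounds the `limsup` from below.
-/

open Filter Topology

lemma le_limsup_rpow_inv_of_frequently_pow_le {f : ℕ → ℝ} {r K : ℝ} (hr : 0 ≤ r) (hK : 0 < K)
    (hbdd : IsBoundedUnder (· ≤ ·) atTop fun m => f m ^ (m : ℝ)⁻¹)
    (h : ∃ᶠ m in atTop, r ^ m ≤ K * f m) :
    r ≤ limsup (fun m => f m ^ (m : ℝ)⁻¹) atTop := by
  have hroot : Tendsto (fun m : ℕ => r / K ^ (m : ℝ)⁻¹) atTop (𝓝 r) := by
    have := (Real.continuousAt_const_rpow hK.ne').tendsto.comp tendsto_inv_atTop_nhds_zero_nat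
    simpa [Pi.div_def, Function.comp_def] using tendsto_const_nhds.div this (by simp)
  have hle : ∀ m : ℕ, m ≠ 0 → r ^ m ≤ K * f m → r / K ^ (m : ℝ)⁻¹ ≤ f m ^ (m : ℝ)⁻¹ := by
    intro m hm hrm
    calc r / K ^ (m : ℝ)⁻¹ = (r ^ m / K) ^ (m : ℝ)⁻¹ := by
          rw [Real.div_rpow (by positivity) hK.le, Real.pow_rpow_inv_natCast hr hm]
      _ ≤ f m ^ (m : ℝ)⁻¹ := by
          gcongr
          rwa [div_le_iff₀' hK]
  refine le_of_forall_lt_imp_le_of_dense fun b hb => le_limsup_of_frequently_le ?_ hbdd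
  exact (h.and_eventually ((hroot.eventually (lt_mem_nhds hb)).and
    (eventually_ne_atTop 0))).mono fun m ⟨hrm, hbm, hm⟩ => hbm.le.trans (hle m hm hrm)

lemma isBoundedUnder_rpow_inv_of_le {f g : ℕ → ℝ} (hf : ∀ m, 0 ≤ f m) (hfg : ∀ m, f m ≤ g m)
    (hg : IsBoundedUnder (· ≤ ·) atTop fun m => g m ^ (m : ℝ)⁻¹) :
    IsBoundedUnder (· ≤ ·) atTop fun m => f m ^ (m : ℝ)⁻¹ :=
  hg.mono_le (.of_forall fun m => Real.rpow_le_rpow (hf m) (hfg m) (by positivity))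

lemma limsup_rpow_inv_le_of_le {f g : ℕ → ℝ} {r : ℝ} (hf : ∀ m, 0 ≤ f m) (hfg : ∀ m, f m ≤ g m)
    (hg : Tendsto (fun m => g m ^ (m : ℝ)⁻¹) atTop (𝓝 r)) :
    limsup (fun m => f m ^ (m : ℝ)⁻¹) atTop ≤ r := by
  rw [← hg.limsup_eq]
  exact limsup_le_limsup (.of_forall fun m => Real.rpow_le_rpow (hf m) (hfg m) (by positivity))
    (isCoboundedUnder_le_of_le atTop fun m => Real.rpow_nonneg (hf m) _) hg.isBoundedUnder_le

section BanachAlgebra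

variable {A : Type*} [NormedRing A] [NormedAlgebra ℂ A] [CompleteSpace A] [NormOneClass A]

lemma spectrum.tendsto_norm_pow_rpow_inv_toReal_spectralRadius (a : A) :
    Tendsto (fun m : ℕ => ‖a ^ m‖ ^ (m : ℝ)⁻¹) atTop (𝓝 (spectralRadius ℂ a).toReal) := by
  have hfin : spectralRadius ℂ a ≠ ⊤ := ne_top_of_le_ne_top ENNReal.coe_ne_top
    (spectrum.spectralRadius_le_nnnorm a)
  refine ((ENNReal.tendsto_toReal hfin).comp
    (spectrum.pow_norm_pow_one_div_tendsto_nhds_spectralRadius a)).congr fun m => ?_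
  simp [ENNReal.toReal_ofReal (Real.rpow_nonneg (norm_nonneg _) _)]

lemma spectrum.toReal_spectralRadius_pow_le_norm_pow (a : A) (m : ℕ) :
    (spectralRadius ℂ a).toReal ^ m ≤ ‖a ^ m‖ := by
  have : Nontrivial A := NormOneClass.nontrivial
  have h := (spectrum.spectralRadius_pow_le' (𝕜 := ℂ) a m).trans
    (spectrum.spectralRadius_le_nnnorm (a ^ m))
  simpa [ENNReal.toReal_pow] using ENNReal.toReal_mono ENNReal.coe_ne_top h

end BanachAlgebra

namespace Matrix

attribute [local instance] Matrix.linftyOpSeminormedAddCommGroup Matrix.linftyOpNormedRing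
  Matrix.linftyOpNormedAlgebra Matrix.linfty_opNormOneClass

section LinftyOpNorm

variable {ι κ α : Type*} [Fintype ι] [Fintype κ]

lemma norm_apply_le_linfty_opNorm [SeminormedAddCommGroup α] (A : Matrix ι κ α) (i : ι) (j : κ) :
    ‖A i j‖ ≤ ‖A‖ := by
  have : ‖A i j‖₊ ≤ ‖A‖₊ := by
    rw [linfty_opNNNorm_def]
    exact (Finset.single_le_sum (fun _ _ => zero_le) (Finset.mem_univ j)).trans
      (Finset.le_sup (f := fun i => ∑ j, ‖A i j‖₊) (Finset.mem_univ i))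
  exact this

lemma exists_linfty_opNorm_le_card_mul_norm_apply [SeminormedAddCommGroup α] [Nonempty ι]
    [Nonempty κ] (A : Matrix ι κ α) : ∃ i j, ‖A‖ ≤ Fintype.card κ * ‖A i j‖ := by
  obtain ⟨⟨i, j⟩, -, hmax⟩ := Finset.exists_max_image Finset.univ (fun p : ι × κ => ‖A p.1 p.2‖₊)
    Finset.univ_nonempty
  refine ⟨i, j, ?_⟩
  have : ‖A‖₊ ≤ Fintype.card κ * ‖A i j‖₊ := by
    rw [linfty_opNNNorm_def]
    refine Finset.sup_le fun k _ => ?_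
    calc ∑ l, ‖A k l‖₊ ≤ Finset.univ.card • ‖A i j‖₊ :=
          Finset.sum_le_card_nsmul _ _ _ fun l _ => hmax (k, l) (Finset.mem_univ _)
      _ = Fintype.card κ * ‖A i j‖₊ := by simp
  exact_mod_cast this

lemma linfty_opNorm_map_ofReal (B : Matrix ι κ ℝ) : ‖B.map Complex.ofReal‖ = ‖B‖ := by
  simp [linfty_opNorm_def]

lemma linfty_opNorm_map_ofReal_pow [DecidableEq ι] (B : Matrix ι ι ℝ) (m : ℕ) :
    ‖B.map Complex.ofReal ^ m‖ = ‖B ^ m‖ := by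
  rw [← linfty_opNorm_map_ofReal (B ^ m)]
  exact congrArg _ (Matrix.map_pow B Complex.ofRealHom m).symm

end LinftyOpNorm

lemma pow_apply_mul_pow_apply_le_pow_add_apply {ι α : Type*} [Fintype ι] [DecidableEq ι]
    [Semiring α] [PartialOrder α] [IsOrderedRing α] {A : Matrix ι ι α}
    (hA : ∀ i j, 0 ≤ A i j) (a b : ℕ) (i k j : ι) :
    (A ^ a) i k * (A ^ b) k j ≤ (A ^ (a + b)) i j := by
  rw [pow_add, mul_apply]
  exact Finset.single_le_sum (fun l _ => mul_nonneg (pow_apply_nonneg hA a i l)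
    (pow_apply_nonneg hA b l j)) (Finset.mem_univ k)

variable {n : ℕ}

lemma spectralRadius_eq_toReal_spectralRadius [NeZero n] (M : Matrix (Fin n) (Fin n) ℝ) :
    M.spectralRadius = (_root_.spectralRadius ℂ (M.map Complex.ofReal)).toReal := by
  obtain ⟨z, hz, hzr⟩ := spectrum.exists_nnnorm_eq_spectralRadius (M.map Complex.ofReal)
  rw [← hzr]
  refine IsGreatest.csSup_eq ⟨⟨z, mem_spectrum_iff_isRoot_charpoly.1 hz, rfl⟩, ?_⟩
  rintro r ⟨μ, hμ, rfl⟩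
  have : (‖μ‖₊ : ENNReal) ≤ ‖z‖₊ :=
    hzr ▸ le_iSup₂ (f := fun μ (_ : μ ∈ spectrum ℂ (M.map Complex.ofReal)) => (‖μ‖₊ : ENNReal)) μ
      (mem_spectrum_iff_isRoot_charpoly.2 hμ)
  exact_mod_cast this

lemma tendsto_linfty_opNorm_pow_rpow_inv_spectralRadius [NeZero n]
    (M : Matrix (Fin n) (Fin n) ℝ) :
    Tendsto (fun m : ℕ => ‖M ^ m‖ ^ (m : ℝ)⁻¹) atTop (𝓝 M.spectralRadius) := by
  rw [spectralRadius_eq_toReal_spectralRadius]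
  simpa only [linfty_opNorm_map_ofReal_pow] using
    spectrum.tendsto_norm_pow_rpow_inv_toReal_spectralRadius (M.map Complex.ofReal)

lemma spectralRadius_pow_le_linfty_opNorm_pow [NeZero n] (M : Matrix (Fin n) (Fin n) ℝ)
    (m : ℕ) : M.spectralRadius ^ m ≤ ‖M ^ m‖ := by
  rw [spectralRadius_eq_toReal_spectralRadius]
  simpa only [linfty_opNorm_map_ofReal_pow] using
    spectrum.toReal_spectralRadius_pow_le_norm_pow (M.map Complex.ofReal) m

section Nonneg

variable [NeZero n] {M : Matrix (Fin n) (Fin n) ℝ}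

lemma isBoundedUnder_pow_apply_rpow_inv (hpos : ∀ i j, 0 ≤ M i j) (i j : Fin n) :
    IsBoundedUnder (· ≤ ·) atTop fun m : ℕ => ((M ^ m) i j) ^ (m : ℝ)⁻¹ :=
  isBoundedUnder_rpow_inv_of_le (fun m => pow_apply_nonneg hpos m i j)
    (fun _ => (Real.le_norm_self _).trans (norm_apply_le_linfty_opNorm _ i j))
    (tendsto_linfty_opNorm_pow_rpow_inv_spectralRadius M).isBoundedUnder_le

lemma limsup_pow_apply_rpow_inv_le_spectralRadius (hpos : ∀ i j, 0 ≤ M i j) (i j : Fin n) :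
    limsup (fun m : ℕ => ((M ^ m) i j) ^ (m : ℝ)⁻¹) atTop ≤ M.spectralRadius :=
  limsup_rpow_inv_le_of_le (fun m => pow_apply_nonneg hpos m i j)
    (fun _ => (Real.le_norm_self _).trans (norm_apply_le_linfty_opNorm _ i j))
    (tendsto_linfty_opNorm_pow_rpow_inv_spectralRadius M)

end Nonneg

namespace IsExpanding

variable {M : Matrix (Fin n) (Fin n) ℝ}

lemma frequently_le_pow_apply (hM : M.IsExpanding) (c : ℝ) (i j : Fin n) :
    ∃ᶠ m in atTop, c ≤ (M ^ m) i j := by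
  have hc : (c : EReal) < limsup (fun m : ℕ => (((M ^ m) i j : ℝ) : EReal)) atTop := by
    rw [hM i j]
    exact EReal.coe_lt_top c
  exact (frequently_lt_of_lt_limsup (by isBoundedDefault) hc).mono fun m hm => by
    exact_mod_cast hm.le

lemma one_le_spectralRadius [NeZero n] (hM : M.IsExpanding) : 1 ≤ M.spectralRadius := by
  have hnorm := tendsto_linfty_opNorm_pow_rpow_inv_spectralRadius M
  rw [← hnorm.limsup_eq]
  refine le_limsup_rpow_inv_of_frequently_pow_le zero_le_one one_pos hnorm.isBoundedUnder_le ?_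
  have i : Fin n := 0
  refine (hM.frequently_le_pow_apply 1 i i).mono fun _ hm => ?_
  simpa using hm.trans ((Real.le_norm_self _).trans (norm_apply_le_linfty_opNorm _ i i))

lemma exists_pow_apply_le_pow_add_apply (hpos : ∀ i j, 0 ≤ M i j) (hM : M.IsExpanding)
    (i j : Fin n) : ∃ C : ℕ, ∀ m k l, ∃ c ≤ C, (M ^ m) k l ≤ (M ^ (m + c)) i j := by
  choose p hp using fun k => (hM.frequently_le_pow_apply 1 i k).exists
  choose q hq using fun l => (hM.frequently_le_pow_apply 1 l j).exists
  refine ⟨Finset.univ.sup p + Finset.univ.sup q, fun m k l => ⟨p k + q l,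
    add_le_add (Finset.le_sup (Finset.mem_univ k)) (Finset.le_sup (Finset.mem_univ l)), ?_⟩⟩
  have hkl := pow_apply_nonneg hpos m k l
  calc (M ^ m) k l ≤ (M ^ p k) i k * (M ^ m) k l * (M ^ q l) l j := by
        nlinarith [hp k, hq l, mul_le_mul_of_nonneg_right (hp k) hkl]
    _ ≤ (M ^ (p k + m)) i l * (M ^ q l) l j := by
        gcongr
        · exact pow_apply_nonneg hpos _ l j
        · exact pow_apply_mul_pow_apply_le_pow_add_apply hpos _ _ i k l
    _ ≤ (M ^ (p k + m + q l)) i j := pow_apply_mul_pow_apply_le_pow_add_apply hpos _ _ i l j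
    _ = (M ^ (m + (p k + q l))) i j := by rw [add_comm (p k) m, add_assoc]

lemma spectralRadius_le_limsup_pow_apply_rpow_inv [NeZero n] (hpos : ∀ i j, 0 ≤ M i j)
    (hM : M.IsExpanding) (i j : Fin n) :
    M.spectralRadius ≤ limsup (fun m : ℕ => ((M ^ m) i j) ^ (m : ℝ)⁻¹) atTop := by
  set ρ := M.spectralRadius
  have hρ : 1 ≤ ρ := hM.one_le_spectralRadius
  have hn : (0 : ℝ) < n := Nat.cast_pos.2 (NeZero.pos n)
  obtain ⟨C, hC⟩ := hM.exists_pow_apply_le_pow_add_apply hpos i j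
  refine le_limsup_rpow_inv_of_frequently_pow_le (zero_le_one.trans hρ) (K := n * ρ ^ C)
    (by positivity) (isBoundedUnder_pow_apply_rpow_inv hpos i j) (frequently_atTop.2 fun N => ?_)
  obtain ⟨k, l, hkl⟩ := exists_linfty_opNorm_le_card_mul_norm_apply (M ^ N)
  rw [Real.norm_of_nonneg (pow_apply_nonneg hpos N k l), Fintype.card_fin] at hkl
  obtain ⟨c, hc, hle⟩ := hC N k l
  refine ⟨N + c, le_self_add, ?_⟩
  calc ρ ^ (N + c) = ρ ^ N * ρ ^ c := pow_add ρ N c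
    _ ≤ (n * (M ^ N) k l) * ρ ^ C :=
        mul_le_mul ((spectralRadius_pow_le_linfty_opNorm_pow M N).trans hkl)
          (pow_le_pow_right₀ hρ hc) (by positivity)
          (mul_nonneg hn.le (pow_apply_nonneg hpos N k l))
    _ ≤ n * ρ ^ C * (M ^ (N + c)) i j := by
        rw [mul_right_comm]
        gcongr

end IsExpanding

end Matrix

/-- For an expanding nonnegative real matrix `M` with spectral radius `λ(M)`, for all
indices `i, j` one has `limsup_{m→∞} (a_{ij}^m)^{1/m} = λ(M)`, where `a_{ij}^m` is the
`(i,j)` entry of `M^m`. -/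
theorem expanding_matrix_entry_growth (n : ℕ) (hn : 0 < n)
    (M : Matrix (Fin n) (Fin n) ℝ) (hpos : ∀ i j, 0 ≤ M i j)
    (hexp : M.IsExpanding) :
    ∀ i j, Filter.limsup (fun m : ℕ => ((M ^ m) i j) ^ ((m : ℝ)⁻¹)) Filter.atTop
      = M.spectralRadius := by
  have : NeZero n := ⟨hn.ne'⟩
  intro i j
  exact (Matrix.limsup_pow_apply_rpow_inv_le_spectralRadius hpos i j).antisymm
    (hexp.spectralRadius_le_limsup_pow_apply_rpow_inv hpos i j)
end

section
/- Let L : C → ℝ_{>0} be a function on an open convex cone C ⊂ ℝ^n that is homogeneous of degree −1, i.e., L(cz) = c^{−1} L(z) for all c > 0 and z ∈ C. If the sublevel region { z ∈ C : L(z) ≤ 1 } is convex, then 1/L is concave on C, and consequently L is convex on C. -/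
/-!
Rescaling `z` to `L z • z` puts it on the level set `{L = 1}`. A convex combination of
`x` and `y` with weights `a, b` is, up to the positive factor `t = a / L x + b / L y`, a
convex combination of these normalised points, hence lies in `{L ≤ 1}`; homogeneity
turns this into `t ≤ 1 / L (a • x + b • y)`, which is concavity of `1 / L`. Convexity of
`L = 1 / (1 / L)` follows since `t ↦ 1 / t` is convex and antitone on `(0, ∞)`.
-/

open Set

variable {𝕜 E : Type*} [Field 𝕜] [LinearOrder 𝕜] [AddCommMonoid E] [Module 𝕜 E]
  {C : Set E} {L : E → 𝕜}

theorem smul_mem_sublevel_of_homogeneous (hcone : ∀ z ∈ C, ∀ c : 𝕜, 0 < c → c • z ∈ C)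
    (hpos : ∀ z ∈ C, 0 < L z) (hhom : ∀ z ∈ C, ∀ c : 𝕜, 0 < c → L (c • z) = L z / c)
    {z : E} (hz : z ∈ C) : L z • z ∈ {z | z ∈ C ∧ L z ≤ 1} :=
  ⟨hcone z hz _ (hpos z hz), by rw [hhom z hz _ (hpos z hz), div_self (hpos z hz).ne']⟩

variable [IsStrictOrderedRing 𝕜]

theorem concaveOn_one_div_of_convex_sublevel (hconv : Convex 𝕜 C)
    (hcone : ∀ z ∈ C, ∀ c : 𝕜, 0 < c → c • z ∈ C)
    (hpos : ∀ z ∈ C, 0 < L z) (hhom : ∀ z ∈ C, ∀ c : 𝕜, 0 < c → L (c • z) = L z / c)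
    (hsub : Convex 𝕜 {z | z ∈ C ∧ L z ≤ 1}) : ConcaveOn 𝕜 C fun z => 1 / L z := by
  refine concaveOn_iff_forall_pos.2 ⟨hconv, fun x hx y hy a b ha hb hab => ?_⟩
  have hLx := hpos x hx
  have hLy := hpos y hy
  have hw : a • x + b • y ∈ C := hconv hx hy ha.le hb.le hab
  set t := a / L x + b / L y with ht
  have htpos : 0 < t := by positivity
  have hnormalised : (a / (L x * t)) • (L x • x) + (b / (L y * t)) • (L y • y)
      = t⁻¹ • (a • x + b • y) := by
    simp only [smul_smul, smul_add]
    congr 2 <;> field_simp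
  have hmem := hsub (smul_mem_sublevel_of_homogeneous hcone hpos hhom hx)
    (smul_mem_sublevel_of_homogeneous hcone hpos hhom hy) (a := a / (L x * t))
    (b := b / (L y * t)) (by positivity) (by positivity) (by rw [ht]; field_simp)
  obtain ⟨-, hle⟩ := hnormalised ▸ hmem
  rw [hhom _ hw _ (inv_pos.2 htpos), div_inv_eq_mul] at hle
  simp only [smul_eq_mul, mul_one_div]
  rw [le_div_iff₀ (hpos _ hw)]
  linarith

theorem ConcaveOn.convexOn_one_div {s : Set E} {g : E → 𝕜}
    (hg : ConcaveOn 𝕜 s g) (hpos : ∀ x ∈ s, 0 < g x) : ConvexOn 𝕜 s fun x => 1 / g x := by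
  have hinv : ConvexOn 𝕜 (Ioi 0) fun t : 𝕜 => t⁻¹ := by
    simpa only [zpow_neg_one] using convexOn_zpow (𝕜 := 𝕜) (-1)
  refine convexOn_iff_forall_pos.2 ⟨hg.1, fun x hx y hy a b ha hb hab => ?_⟩
  have hgx := hpos x hx
  have hgy := hpos y hy
  have hcomb : 0 < a • g x + b • g y := by simp only [smul_eq_mul]; positivity
  simp only [one_div]
  calc (g (a • x + b • y))⁻¹
      ≤ (a • g x + b • g y)⁻¹ := inv_anti₀ hcomb (hg.2 hx hy ha.le hb.le hab)
    _ ≤ a • (g x)⁻¹ + b • (g y)⁻¹ := hinv.2 hgx hgy ha.le hb.le hab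

theorem homogeneous_sublevel_convex_implies_convex_general (n : ℕ)
    (C : Set (Fin n → ℝ)) (hconv : Convex ℝ C)
    (hcone : ∀ z ∈ C, ∀ c : ℝ, 0 < c → c • z ∈ C)
    (L : (Fin n → ℝ) → ℝ)
    (hpos : ∀ z ∈ C, 0 < L z)
    (hhom : ∀ z ∈ C, ∀ c : ℝ, 0 < c → L (c • z) = L z / c)
    (hsub : Convex ℝ {z | z ∈ C ∧ L z ≤ 1}) :
    ConcaveOn ℝ C (fun z => 1 / L z) ∧ ConvexOn ℝ C L := by
  have hconc := concaveOn_one_div_of_convex_sublevel hconv hcone hpos hhom hsub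
  refine ⟨hconc, (hconc.convexOn_one_div fun z hz => one_div_pos.2 (hpos z hz)).congr ?_⟩
  exact fun z _ => one_div_one_div (L z)

/-- Let `L : C → ℝ_{>0}` be homogeneous of degree `-1` on an open convex cone
`C ⊂ ℝ^n`, i.e. `L (c • z) = L z / c` for `c > 0`. If the sublevel region
`{ z ∈ C : L z ≤ 1 }` is convex, then `1/L` is concave on `C` and consequently `L`
is convex on `C`. -/
theorem homogeneous_sublevel_convex_implies_convex (n : ℕ)
    (C : Set (Fin n → ℝ)) (hopen : IsOpen C) (hconv : Convex ℝ C)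
    (hcone : ∀ z ∈ C, ∀ c : ℝ, 0 < c → c • z ∈ C)
    (L : (Fin n → ℝ) → ℝ)
    (hpos : ∀ z ∈ C, 0 < L z)
    (hhom : ∀ z ∈ C, ∀ c : ℝ, 0 < c → L (c • z) = L z / c)
    (hsub : Convex ℝ {z | z ∈ C ∧ L z ≤ 1}) :
    ConcaveOn ℝ C (fun z => 1 / L z) ∧ ConvexOn ℝ C L :=
  homogeneous_sublevel_convex_implies_convex_general n C hconv hcone L hpos hhom hsub
end

section
/- The 4×4 matrix M with rows (0,0,2,1), (0,0,1,1), (2,1,0,0), (1,1,0,0) is irreducible and expanding (its square is block diagonal with two 2×2 positive blocks, and powers of M have unbounded entries), but M is not primitive: no power of M has all entries strictly positive. -/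
/-!
`M12 ^ 2` is block diagonal with positive blocks and diagonal entries at least `2`, so every
entry of `M12` or of `M12 ^ 2` is positive (irreducibility), and multiplying by `M12 ^ 2` at
least doubles every entry of a power, which makes all entries grow exponentially. On the other
hand `M12` only links `{0, 1}` with `{2, 3}`, so in each power either the entries inside the
blocks or those between the blocks vanish.
-/

/-- The transition matrix of the free group automorphism
`a ↦ cdc, b ↦ cd, c ↦ aba, d ↦ ab`. -/
def M12 : Matrix (Fin 4) (Fin 4) ℕ :=
  !![0, 0, 2, 1;
     0, 0, 1, 1;
     2, 1, 0, 0;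
     1, 1, 0, 0]

open Filter

theorem EReal.limsup_natCast_eq_top {u : ℕ → ℕ} (h : ∀ n : ℕ, ∃ᶠ m in atTop, n ≤ u m) :
    limsup (fun m => (u m : EReal)) atTop = ⊤ := by
  rw [EReal.eq_top_iff_forall_lt]
  intro y
  obtain ⟨n, hn⟩ := exists_nat_gt y
  have hy : (y : EReal) < n := by exact_mod_cast hn
  exact hy.trans_le (le_limsup_of_frequently_le' ((h n).mono fun m hm => by exact_mod_cast hm))

namespace Matrix

variable {n : Type*} [Fintype n]

theorem apply_mul_diag_le_mul_apply (A B : Matrix n n ℕ) (i j : n) :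
    A i j * B j j ≤ (A * B) i j :=
  Finset.single_le_sum (f := fun k => A i k * B k j) (fun _ _ => Nat.zero_le _)
    (Finset.mem_univ j)

variable [DecidableEq n]

theorem pow_mul_apply_le_mul_pow_apply {B : Matrix n n ℕ} {c : ℕ} (hB : ∀ j, c ≤ B j j)
    (A : Matrix n n ℕ) (i j : n) (k : ℕ) : c ^ k * A i j ≤ (A * B ^ k) i j := by
  induction k with
  | zero => simp
  | succ k ih =>
    calc c ^ (k + 1) * A i j = c ^ k * A i j * c := by ring
      _ ≤ (A * B ^ k) i j * B j j := Nat.mul_le_mul ih (hB j)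
      _ ≤ (A * B ^ (k + 1)) i j := by
        rw [pow_succ, ← Matrix.mul_assoc]
        exact apply_mul_diag_le_mul_apply _ _ i j

theorem limsup_pow_apply_eq_top {A : Matrix n n ℕ} {p : ℕ} (hp : 0 < p)
    (hdiag : ∀ j, 2 ≤ (A ^ p) j j) {i j : n} (hij : ∃ m, 0 < (A ^ m) i j) :
    limsup (fun m => ((A ^ m) i j : EReal)) atTop = ⊤ := by
  obtain ⟨m₀, hm₀⟩ := hij
  have hgrowth (k : ℕ) : 2 ^ k ≤ (A ^ (m₀ + p * k)) i j := by
    rw [pow_add, pow_mul]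
    exact (Nat.le_mul_of_pos_right _ hm₀).trans (pow_mul_apply_le_mul_pow_apply hdiag _ i j k)
  refine EReal.limsup_natCast_eq_top fun N => frequently_atTop.2 fun M => ?_
  refine ⟨m₀ + p * (N + M), by nlinarith, ?_⟩
  calc N ≤ 2 ^ (N + M) := (Nat.le_add_right N M).trans (Nat.lt_two_pow_self).le
    _ ≤ _ := hgrowth _

theorem grade_eq_of_pow_apply_ne_zero {R G : Type*} [Semiring R] [AddMonoidWithOne G]
    {A : Matrix n n R} {σ : n → G} (hA : ∀ i j, A i j ≠ 0 → σ j = σ i + 1) (m : ℕ) (i j : n)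
    (hm : (A ^ m) i j ≠ 0) : σ j = σ i + m := by
  induction m generalizing j with
  | zero =>
    obtain rfl : i = j := by_contra fun h => hm (by rw [pow_zero, one_apply_ne h])
    simp
  | succ m ih =>
    rw [pow_succ, mul_apply] at hm
    obtain ⟨k, -, hk⟩ := Finset.exists_ne_zero_of_sum_ne_zero hm
    rw [hA k j (right_ne_zero_of_mul hk), ih k (left_ne_zero_of_mul hk), Nat.cast_succ, add_assoc]

theorem exists_pow_apply_eq_zero {R G : Type*} [Semiring R] [AddGroupWithOne G] [NeZero (1 : G)]
    {A : Matrix n n R} {σ : n → G} (hA : ∀ i j, A i j ≠ 0 → σ j = σ i + 1)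
    (hσ : Function.Surjective σ) (m : ℕ) (i : n) : ∃ j, (A ^ m) i j = 0 := by
  obtain ⟨j, hj⟩ := hσ (σ i + m + 1)
  refine ⟨j, by_contra fun hm => one_ne_zero (α := G) ?_⟩
  simpa [hj] using grade_eq_of_pow_apply_ne_zero hA m i j hm

end Matrix

theorem M12_sq : M12 ^ 2 = !![5, 3, 0, 0; 3, 2, 0, 0; 0, 0, 5, 3; 0, 0, 3, 2] := by
  decide

theorem M12_pos_or_sq_pos (i j : Fin 4) : 0 < M12 i j ∨ 0 < (M12 ^ 2) i j := by
  rw [M12_sq]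
  fin_cases i <;> fin_cases j <;> decide

theorem two_le_M12_sq_diag (j : Fin 4) : 2 ≤ (M12 ^ 2) j j := by
  rw [M12_sq]
  fin_cases j <;> decide

theorem M12_apply_ne_zero_parity (i j : Fin 4) (h : M12 i j ≠ 0) :
    (![0, 0, 1, 1] : Fin 4 → ZMod 2) j = ![0, 0, 1, 1] i + 1 := by
  revert h
  fin_cases i <;> fin_cases j <;> decide

/-- The matrix `M12` is irreducible and expanding (every entry of its powers has
`limsup = ∞`), but it is not primitive (Perron-Frobenius): no power of it has all
entries strictly positive. -/
theorem M12_irreducible_expanding_not_primitive :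
    (∀ i j, ∃ m : ℕ, 0 < (M12 ^ m) i j) ∧
    (∀ i j, Filter.limsup (fun m : ℕ => (((M12 ^ m) i j : ℕ) : EReal)) Filter.atTop = ⊤) ∧
    ¬ ∃ m : ℕ, ∀ i j, 0 < (M12 ^ m) i j := by
  have irreducible (i j : Fin 4) : ∃ m : ℕ, 0 < (M12 ^ m) i j :=
    (M12_pos_or_sq_pos i j).elim (fun h => ⟨1, by simpa using h⟩) fun h => ⟨2, h⟩
  refine ⟨irreducible, fun i j => Matrix.limsup_pow_apply_eq_top two_pos two_le_M12_sq_diag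
    (irreducible i j), ?_⟩
  rintro ⟨m, hpos⟩
  obtain ⟨j, hj⟩ := Matrix.exists_pow_apply_eq_zero M12_apply_ne_zero_parity (by decide) m 0
  exact (hpos 0 j).ne' hj
end

section
/- Let D' be a digraph obtained from D by splitting a single vertex v into two vertices v_1', v_2' as follows: every vertex u ≠ v of D corresponds to a vertex u' of D'; each edge of D between vertices ≠ v has a unique lift; each edge from w ≠ v into v lifts to two edges, one into v_1' and one into v_2'; each edge out of v lifts to a single edge out of a determined one of v_1', v_2'. Then there is an injection q* from the set of cycles of D into the set of cycles of D' preserving the number of simple cycles (size) and the number of edges (length), with q ∘ q* = id, where q : D' → D is the quotient collapsing v_1', v_2' back to v. -/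
open scoped Classical

/-- A set `F` of edges of a digraph (with source map `s` and target map `t`) is a
*cycle*: a nonempty vertex-disjoint union of simple directed cycles. Equivalently,
each vertex has at most one outgoing and at most one incoming edge in `F`, and the set
of sources equals the set of targets. -/
noncomputable def IsCycleSet {V E : Type*} (s t : E → V) (F : Finset E) : Prop :=
  F.Nonempty ∧ Set.InjOn s F ∧ Set.InjOn t F ∧ F.image s = F.image t

/-- The size of a cycle: its number of simple cycles, i.e. the number of minimal
nonempty sub-cycles it contains. -/
noncomputable def cycSize {V E : Type*} (s t : E → V) (F : Finset E) : ℕ :=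
  (F.powerset.filter fun γ => IsCycleSet s t γ ∧ ∀ γ' ⊂ γ, ¬ IsCycleSet s t γ').card

/-! Pick a section `σ` of `ι` with `σ v = v₁`, and lift every edge into `v` to its copy into
`v₁`. Allowability puts the lift of every edge out of `v` at `v₁` as well, so `σ` together
with the edge lift `L` is an embedding of digraphs `D ↪ D'`. Taking images under an embedding
preserves and reflects cycles and strict inclusions, hence minimal sub-cycles, so it preserves
size, and being injective it preserves length. -/

open Function

theorem Function.Surjective.exists_rightInverse_apply_eq {α β : Type*} {f : α → β}
    (hf : Surjective f) {a : α} {b : β} (h : f a = b) :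
    ∃ g : β → α, RightInverse g f ∧ g b = a := by
  refine ⟨update (surjInv hf) b a, fun y => ?_, update_self ..⟩
  rcases eq_or_ne y b with rfl | hy
  · rw [update_self, h]
  · rw [update_of_ne hy, surjInv_eq hf]

section Embedding

variable {V V' E E' : Type*} {s t : E → V} {s' t' : E' → V'} {σ : V → V'} {L : E → E'}

theorem isCycleSet_image_iff (hσ : Injective σ) (hL : Injective L)
    (hs : s' ∘ L = σ ∘ s) (ht : t' ∘ L = σ ∘ t) (F : Finset E) :
    IsCycleSet s' t' (F.image L) ↔ IsCycleSet s t F := by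
  have injOn_iff {f : E' → V'} {g : E → V} (h : f ∘ L = σ ∘ g) :
      Set.InjOn f ↑(F.image L) ↔ Set.InjOn g F := by
    rw [Finset.coe_image, ← hL.injOn.comp_iff, h]
    exact ⟨fun h => h.of_comp, hσ.comp_injOn⟩
  unfold IsCycleSet
  rw [Finset.image_nonempty, injOn_iff hs, injOn_iff ht, Finset.image_image, Finset.image_image,
    hs, ht, ← Finset.image_image, ← Finset.image_image (g := σ),
    (Finset.image_injective hσ).eq_iff]

theorem cycSize_image (hσ : Injective σ) (hL : Injective L)
    (hs : s' ∘ L = σ ∘ s) (ht : t' ∘ L = σ ∘ t) (F : Finset E) :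
    cycSize s' t' (F.image L) = cycSize s t F := by
  unfold cycSize
  rw [Finset.powerset_image, Finset.filter_image,
    Finset.card_image_of_injective _ (Finset.image_injective hL)]
  refine congrArg Finset.card (Finset.filter_congr fun γ _ => ?_)
  rw [isCycleSet_image_iff hσ hL hs ht]
  refine and_congr_right fun _ => ⟨fun h δ hδ hδcyc => ?_, fun h γ' hγ' hγ'cyc => ?_⟩
  · exact h _ ((Finset.image_ssubset_image hL).2 hδ) ((isCycleSet_image_iff hσ hL hs ht δ).2 hδcyc)
  · obtain ⟨δ, -, rfl⟩ := Finset.subset_image_iff.1 hγ'.subset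
    exact h δ ((Finset.image_ssubset_image hL).1 hγ') ((isCycleSet_image_iff hσ hL hs ht δ).1 hγ'cyc)

end Embedding

theorem exists_rightInverse_lift_into {V V' E E' : Type*} {t : E → V} {t' : E' → V'}
    {qE : E' → E} {v : V} {v₁ : V'} (hlift_one : ∀ e, t e ≠ v → ∃ e', qE e' = e)
    (hlift_two : ∀ e, t e = v → ∃ e', qE e' = e ∧ t' e' = v₁) :
    ∃ L : E → E', RightInverse L qE ∧ ∀ e, t e = v → t' (L e) = v₁ := by
  have h (e : E) : ∃ e', qE e' = e ∧ (t e = v → t' e' = v₁) := by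
    by_cases he : t e = v
    · obtain ⟨e', hqe', ht'⟩ := hlift_two e he
      exact ⟨e', hqe', fun _ => ht'⟩
    · obtain ⟨e', hqe'⟩ := hlift_one e he
      exact ⟨e', hqe', fun h => absurd h he⟩
  choose L hqL hLv using h
  exact ⟨L, hqL, hLv⟩

theorem apply_eq_self_of_rightInverse {V V' : Type*} {ι : V' → V} {σ : V → V'} {v : V} {v₁ : V'}
    (hσ : RightInverse σ ι) (hσv : σ v = v₁)
    (hinj : ∀ u₁' u₂', ι u₁' ≠ v → ι u₁' = ι u₂' → u₁' = u₂')
    {u' : V'} (hu' : ι u' = v → u' = v₁) : σ (ι u') = u' := by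
  by_cases h : ι u' = v
  · rw [h, hσv, hu' h]
  · exact hinj _ _ (by rwa [hσ]) (hσ _)

theorem cycle_lifting_injection_general {V V' E E' : Type*}
    (s t : E → V) (s' t' : E' → V')
    (v : V) (v₁ v₂ : V') (ι : V' → V) (qE : E' → E)
    (hv₁ : ι v₁ = v)
    (hinj : ∀ u₁' u₂', ι u₁' ≠ v → ι u₁' = ι u₂' → u₁' = u₂')
    (hsurj : Function.Surjective ι)
    (hsrc : ∀ e', s (qE e') = ι (s' e'))
    (htgt : ∀ e', t (qE e') = ι (t' e'))
    (hlift_one : ∀ e : E, t e ≠ v → ∃! e', qE e' = e)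
    (hlift_two : ∀ e : E, t e = v → ∃ e₁' e₂', qE e₁' = e ∧ qE e₂' = e ∧
      t' e₁' = v₁ ∧ t' e₂' = v₂ ∧ ∀ e', qE e' = e → e' = e₁' ∨ e' = e₂')
    (hallow : ∀ e', s (qE e') = v → s' e' = v₁) :
    ∃ lift : {F : Finset E // IsCycleSet s t F} → {F' : Finset E' // IsCycleSet s' t' F'},
      Function.Injective lift ∧
      (∀ F, (lift F).1.image qE = F.1) ∧
      (∀ F, cycSize s' t' (lift F).1 = cycSize s t F.1) ∧
      (∀ F, (lift F).1.card = F.1.card) := by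
  obtain ⟨σ, hισ, hσv⟩ := hsurj.exists_rightInverse_apply_eq hv₁
  obtain ⟨L, hqL, hLv⟩ := exists_rightInverse_lift_into (fun e he => (hlift_one e he).exists)
    fun e he => by
      obtain ⟨e₁', -, hqe₁', -, ht₁', -⟩ := hlift_two e he
      exact ⟨e₁', hqe₁', ht₁'⟩
  have hs : s' ∘ L = σ ∘ s := funext fun e => calc
    s' (L e) = σ (ι (s' (L e))) :=
      (apply_eq_self_of_rightInverse hισ hσv hinj fun h => hallow _ ((hsrc _).trans h)).symm
    _ = σ (s e) := by rw [← hsrc, hqL e]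
  have ht : t' ∘ L = σ ∘ t := funext fun e => calc
    t' (L e) = σ (ι (t' (L e))) :=
      (apply_eq_self_of_rightInverse hισ hσv hinj fun h => hLv e ((hqL e ▸ htgt (L e)).trans h)).symm
    _ = σ (t e) := by rw [← htgt, hqL e]
  have hσ : Injective σ := hισ.injective
  have hL : Injective L := hqL.injective
  refine ⟨fun F => ⟨F.1.image L, (isCycleSet_image_iff hσ hL hs ht F.1).2 F.2⟩,
    fun F G h => Subtype.ext (Finset.image_injective hL (congrArg Subtype.val h)),
    fun F => ?_, fun F => cycSize_image hσ hL hs ht F.1,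
    fun F => Finset.card_image_of_injective _ hL⟩
  rw [Finset.image_image, hqL.comp_eq_id, Finset.image_id]

/-- Let `D'` be obtained from `D` by splitting a vertex `v` into `v₁', v₂'`: vertices
of `D'` map to vertices of `D` by `ι`, edges of `D'` to edges of `D` by `qE`
(compatibly with sources and targets); every edge of `D` with target `≠ v` has a
unique lift, every edge with target `v` has exactly two lifts (one into each of
`v₁', v₂'`), and the splitting is allowable: every lift of an edge out of `v` emanates
from `v₁'`. Then there is an injection `q*` from the cycles of `D` to the cycles of
`D'` preserving size and length, and with `q ∘ q* = id` (the image under `qE` of the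
lifted cycle is the original cycle). -/
theorem cycle_lifting_injection {V V' E E' : Type*}
    (s t : E → V) (s' t' : E' → V')
    (v : V) (v₁ v₂ : V') (ι : V' → V) (qE : E' → E)
    (hv₁ : ι v₁ = v) (hv₂ : ι v₂ = v) (hv₁₂ : v₁ ≠ v₂)
    (hfib : ∀ u', ι u' = v → u' = v₁ ∨ u' = v₂)
    (hinj : ∀ u₁' u₂', ι u₁' ≠ v → ι u₁' = ι u₂' → u₁' = u₂')
    (hsurj : Function.Surjective ι)
    (hsrc : ∀ e', s (qE e') = ι (s' e'))
    (htgt : ∀ e', t (qE e') = ι (t' e'))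
    (hlift_one : ∀ e : E, t e ≠ v → ∃! e', qE e' = e)
    (hlift_two : ∀ e : E, t e = v → ∃ e₁' e₂', qE e₁' = e ∧ qE e₂' = e ∧
      t' e₁' = v₁ ∧ t' e₂' = v₂ ∧ ∀ e', qE e' = e → e' = e₁' ∨ e' = e₂')
    (hallow : ∀ e', s (qE e') = v → s' e' = v₁) :
    ∃ lift : {F : Finset E // IsCycleSet s t F} → {F' : Finset E' // IsCycleSet s' t' F'},
      Function.Injective lift ∧
      (∀ F, (lift F).1.image qE = F.1) ∧
      (∀ F, cycSize s' t' (lift F).1 = cycSize s t F.1) ∧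
      (∀ F, (lift F).1.card = F.1.card) :=
  cycle_lifting_injection_general s t s' t' v v₁ v₂ ι qE hv₁ hinj hsurj hsrc htgt hlift_one
    hlift_two hallow
end
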